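/- Let a, b be integers not divisible by 7. Then for all w, x₁, x₂, x₃ ∈ ℚ₇ satisfying w² = 28a²x₁⁶ + 2b·x₂⁶ + 686b·x₃⁶ and x₂² + 7x₃² ≠ 0, the 7-adic valuation v₇(x₂² + 7x₃²) is even. -/

import Mathlib

instance : Fact (Nat.Prime 7) := ⟨by norm_num⟩

/-! The monomials `28a²x₁⁶`, `2b·x₂⁶`, `686b·x₃⁶` have valuations `≡ 1, 0, 3 (mod 6)`. For
`x₃ ≠ 0` the first and third cannot cancel, so their sum has odd valuation at most
`3 + 6 v(x₃)`. Since `v(w²)` is even, the middle term must have strictly smaller valuation,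
which forces `v(x₂) ≤ v(x₃)`; then `x₂²` dominates `7x₃²` and `v(x₂² + 7x₃²) = 2 v(x₂)`. -/

namespace Padic

variable {p : ℕ} [Fact p.Prime]

theorem valuation_neg (x : ℚ_[p]) : (-x).valuation = x.valuation := by
  rcases eq_or_ne x 0 with rfl | hx
  · simp
  have h := norm_neg x
  have hp_pos : (0 : ℝ) < p := mod_cast (Fact.out : p.Prime).pos
  have hp_ne_one : (p : ℝ) ≠ 1 := mod_cast (Fact.out : p.Prime).ne_one
  rwa [norm_eq_zpow_neg_valuation (neg_ne_zero.2 hx), norm_eq_zpow_neg_valuation hx,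
    zpow_right_inj₀ hp_pos hp_ne_one, neg_inj] at h

theorem valuation_add_eq_left {x y : ℚ_[p]} (hx : x ≠ 0)
    (h : x.valuation < y.valuation) : x + y ≠ 0 ∧ (x + y).valuation = x.valuation := by
  rcases eq_or_ne y 0 with rfl | hy
  · simpa using hx
  have hxy : x + y ≠ 0 := fun h0 => by
    rw [eq_neg_of_add_eq_zero_right h0, valuation_neg] at h
    exact lt_irrefl _ h
  refine ⟨hxy, le_antisymm ?_ ?_⟩
  · have := le_valuation_add (x := x + y) (y := -y) (by simpa using hx)
    rw [add_neg_cancel_right, valuation_neg] at this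
    exact (min_le_iff.1 this).resolve_right (not_le.2 h)
  · simpa [min_eq_left h.le] using le_valuation_add hxy

theorem valuation_add_eq_min {x y : ℚ_[p]} (hx : x ≠ 0) (hy : y ≠ 0)
    (h : x.valuation ≠ y.valuation) :
    x + y ≠ 0 ∧ (x + y).valuation = min x.valuation y.valuation := by
  rcases h.lt_or_gt with hlt | hlt
  · simpa [min_eq_left hlt.le] using valuation_add_eq_left hx hlt
  · simpa [add_comm x, min_eq_right hlt.le] using valuation_add_eq_left hy hlt

theorem even_valuation_sq (x : ℚ_[p]) : Even (x ^ 2).valuation := by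
  simp [valuation_pow, parity_simps]

theorem valuation_mul_pow {c x : ℚ_[p]} (hc : c ≠ 0) (hx : x ≠ 0) (n : ℕ) :
    (c * x ^ n).valuation = c.valuation + n * x.valuation := by
  rw [valuation_mul hc (pow_ne_zero n hx), valuation_pow]

theorem valuation_prime_pow_mul_intCast {n : ℤ} (hn : ¬ (p : ℤ) ∣ n) (k : ℕ) :
    ((p : ℚ_[p]) ^ k * n).valuation = k := by
  have hn0 : (n : ℚ_[p]) ≠ 0 := Int.cast_ne_zero.2 (by rintro rfl; exact hn (dvd_zero _))
  rw [mul_comm, valuation_mul_pow hn0 (by exact_mod_cast (Fact.out : p.Prime).ne_zero),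
    valuation_intCast, padicValInt.eq_zero_of_not_dvd hn, valuation_p]
  simp

theorem valuation_sq_add_prime_mul_sq {x y : ℚ_[p]} (hx : x ≠ 0) (hy : y ≠ 0)
    (h : x.valuation ≤ y.valuation) : (x ^ 2 + p * y ^ 2).valuation = 2 * x.valuation := by
  have hp : (p : ℚ_[p]) ≠ 0 := mod_cast (Fact.out : p.Prime).ne_zero
  rw [(valuation_add_eq_left (pow_ne_zero 2 hx) ?_).2, valuation_pow]
  · push_cast; ring
  rw [valuation_pow, valuation_mul_pow hp hy, valuation_p]
  push_cast
  omega

theorem odd_valuation_mul_pow_six_add {c d x y : ℚ_[p]} (hc : c.valuation = 1)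
    (hd : d.valuation = 3) (hy : y ≠ 0) :
    c * x ^ 6 + d * y ^ 6 ≠ 0 ∧ Odd (c * x ^ 6 + d * y ^ 6).valuation ∧
      (c * x ^ 6 + d * y ^ 6).valuation ≤ 3 + 6 * y.valuation := by
  have hc₀ : c ≠ 0 := by rintro rfl; simp at hc
  have hd₀ : d ≠ 0 := by rintro rfl; simp at hd
  have hdy := valuation_mul_pow hd₀ hy 6
  rw [hd] at hdy
  rcases eq_or_ne x 0 with rfl | hx
  · simp only [ne_eq, OfNat.ofNat_ne_zero, not_false_eq_true, zero_pow, mul_zero, zero_add, hdy]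
    exact ⟨mul_ne_zero hd₀ (pow_ne_zero 6 hy), ⟨1 + 3 * y.valuation, by ring⟩, le_rfl⟩
  have hcx := valuation_mul_pow hc₀ hx 6
  rw [hc] at hcx
  obtain ⟨hne, hmin⟩ := valuation_add_eq_min (mul_ne_zero hc₀ (pow_ne_zero 6 hx))
    (mul_ne_zero hd₀ (pow_ne_zero 6 hy)) (by omega)
  rw [hmin, hcx, hdy]
  refine ⟨hne, ?_, min_le_right _ _⟩
  rcases min_choice (1 + (6 : ℕ) * x.valuation) (3 + (6 : ℕ) * y.valuation) with hm | hm
  · rw [hm]; exact ⟨3 * x.valuation, by push_cast; ring⟩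
  · rw [hm]; exact ⟨1 + 3 * y.valuation, by push_cast; ring⟩

theorem lt_valuation_of_sq_eq_add_mul_pow_six {w u c x : ℚ_[p]} (hu : u ≠ 0)
    (hodd : Odd u.valuation) (hc : Even c.valuation) (h : w ^ 2 = u + c * x ^ 6) :
    x ≠ 0 ∧ c.valuation + 6 * x.valuation < u.valuation := by
  have hw := even_valuation_sq w
  have he : c * x ^ 6 ≠ 0 := by
    intro he
    rw [he, add_zero] at h
    exact Int.not_even_iff_odd.2 hodd (h ▸ hw)
  obtain ⟨hc₀, hx⟩ : c ≠ 0 ∧ x ≠ 0 := by simpa using he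
  have hev : Even (c * x ^ 6).valuation := by
    rw [valuation_mul_pow hc₀ hx]
    exact hc.add ⟨3 * x.valuation, by push_cast; ring⟩
  have hne : u.valuation ≠ (c * x ^ 6).valuation := fun h' =>
    Int.not_even_iff_odd.2 hodd (h' ▸ hev)
  obtain ⟨-, hsum⟩ := valuation_add_eq_min hu he hne
  refine ⟨hx, ?_⟩
  by_contra! hle
  rw [← h, min_eq_left (by rw [valuation_mul_pow hc₀ hx]; exact_mod_cast hle)] at hsum
  exact Int.not_even_iff_odd.2 hodd (hsum ▸ hw)

end Padic

theorem stmt_10_general (a b : ℤ) (ha : ¬ (7 : ℤ) ∣ a) (hb : ¬ (7 : ℤ) ∣ b)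
    (w x₁ x₂ x₃ : ℚ_[7])
    (heq : w ^ 2 = 28 * (a : ℚ_[7]) ^ 2 * x₁ ^ 6 + 2 * (b : ℚ_[7]) * x₂ ^ 6
        + 686 * (b : ℚ_[7]) * x₃ ^ 6) :
    Even ((x₂ ^ 2 + 7 * x₃ ^ 2).valuation) := by
  rcases eq_or_ne x₃ 0 with rfl | hx₃
  · simp
  have h7 : Prime (7 : ℤ) := Int.prime_iff_natAbs_prime.2 (by norm_num)
  have h2b : ¬ (7 : ℤ) ∣ 2 * b := fun h => hb ((h7.dvd_mul.1 h).resolve_left (by norm_num))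
  have h4a : ¬ (7 : ℤ) ∣ 4 * a ^ 2 := fun h =>
    ha (h7.dvd_of_dvd_pow ((h7.dvd_mul.1 h).resolve_left (by norm_num)))
  have hc : ((28 : ℚ_[7]) * a ^ 2).valuation = 1 := by
    rw [show (28 : ℚ_[7]) * a ^ 2 = (7 : ℕ) ^ 1 * ((4 * a ^ 2 : ℤ) : ℚ_[7]) by push_cast; ring]
    exact Padic.valuation_prime_pow_mul_intCast h4a 1
  have hd : ((686 : ℚ_[7]) * b).valuation = 3 := by
    rw [show (686 : ℚ_[7]) * b = (7 : ℕ) ^ 3 * ((2 * b : ℤ) : ℚ_[7]) by push_cast; ring]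
    exact Padic.valuation_prime_pow_mul_intCast h2b 3
  have he : ((2 : ℚ_[7]) * b).valuation = 0 := by
    rw [show (2 : ℚ_[7]) * b = (7 : ℕ) ^ 0 * ((2 * b : ℤ) : ℚ_[7]) by push_cast; ring]
    exact Padic.valuation_prime_pow_mul_intCast h2b 0
  obtain ⟨hu, hodd, hle⟩ := Padic.odd_valuation_mul_pow_six_add (x := x₁) hc hd hx₃
  obtain ⟨hx₂, hlt⟩ := Padic.lt_valuation_of_sq_eq_add_mul_pow_six (c := 2 * b) (x := x₂) hu hodd
    (he ▸ Even.zero) (by rw [heq]; ring)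
  have hval := Padic.valuation_sq_add_prime_mul_sq hx₂ hx₃ (by omega)
  push_cast at hval
  exact hval ▸ even_two_mul _

/-- If `a, b` are integers not divisible by `7`, then every solution
`w, x₁, x₂, x₃ ∈ ℚ₇` of `w² = 28a²x₁⁶ + 2b·x₂⁶ + 686b·x₃⁶` with
`x₂² + 7x₃² ≠ 0` has `v₇(x₂² + 7x₃²)` even. -/
theorem stmt_10 (a b : ℤ) (ha : ¬ (7 : ℤ) ∣ a) (hb : ¬ (7 : ℤ) ∣ b)
    (w x₁ x₂ x₃ : ℚ_[7])
    (heq : w ^ 2 = 28 * (a : ℚ_[7]) ^ 2 * x₁ ^ 6 + 2 * (b : ℚ_[7]) * x₂ ^ 6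
        + 686 * (b : ℚ_[7]) * x₃ ^ 6)
    (hne : x₂ ^ 2 + 7 * x₃ ^ 2 ≠ 0) :
    Even ((x₂ ^ 2 + 7 * x₃ ^ 2).valuation) :=
  stmt_10_general a b ha hb w x₁ x₂ x₃ heq
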